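/- Let F be a field, let N ⊴ G be groups, and let W be an irreducible FN-module with inertia group T = I_G(W). Then the maps S ↦ ind_T^G S and V ↦ (W-homogeneous component of V) yield mutually inverse bijections between the isomorphism classes of irreducible FT-modules lying over W and the isomorphism classes of irreducible FG-modules lying over W. -/

import Mathlib

open scoped TensorProduct DirectSum

section Preliminaries

variable (F : Type*) [Field F]

/-- Isomorphism (equivalence) of representations: an `F`-linear equivalence intertwining
the two actions. -/
def RepIso {G : Type*} [Monoid G] {V V' : Type*} [AddCommMonoid V] [Module F V]
    [AddCommMonoid V'] [Module F V'] (ρ : Representation F G V) (τ : Representation F G V') :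
    Prop :=
  ∃ e : V ≃ₗ[F] V', ∀ (g : G) (v : V), e (ρ g v) = τ g (e v)

/-- Irreducibility of a representation: the space is nonzero and admits no invariant
subspaces other than `⊥` and `⊤`. -/
def IsIrreducibleRep {G : Type*} [Monoid G] {V : Type*} [AddCommMonoid V] [Module F V]
    (ρ : Representation F G V) : Prop :=
  Nontrivial V ∧ ∀ p : Submodule F V, (∀ g : G, ∀ v ∈ p, ρ g v ∈ p) → p = ⊥ ∨ p = ⊤

/-- The subrepresentation on an invariant submodule. -/
def subRep {G : Type*} [Monoid G] {V : Type*} [AddCommMonoid V] [Module F V]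
    (ρ : Representation F G V) (p : Submodule F V) (hp : ∀ g : G, ∀ v ∈ p, ρ g v ∈ p) :
    Representation F G ↥p where
  toFun g := (ρ g).restrict (fun v hv => hp g v hv)
  map_one' := by ext v; simp [LinearMap.restrict_apply]
  map_mul' g₁ g₂ := by ext v; simp [LinearMap.restrict_apply]

/-- A representation is completely reducible if the underlying module is the sum of its
irreducible invariant submodules. -/
def IsCompletelyReducibleRep {G : Type*} [Monoid G] {V : Type*} [AddCommMonoid V]
    [Module F V] (ρ : Representation F G V) : Prop :=
  sSup {q : Submodule F V |
    ∃ hq : ∀ g : G, ∀ v ∈ q, ρ g v ∈ q, IsIrreducibleRep F (subRep F ρ q hq)} = ⊤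

/-- The homogeneous component determined by `σ`: the sum of all irreducible invariant
submodules whose subrepresentation is isomorphic to `σ`. -/
noncomputable def homComponent {G : Type*} [Monoid G] {V W : Type*} [AddCommMonoid V]
    [Module F V] [AddCommMonoid W] [Module F W] (ρ : Representation F G V)
    (σ : Representation F G W) : Submodule F V :=
  sSup {q : Submodule F V |
    ∃ hq : ∀ g : G, ∀ v ∈ q, ρ g v ∈ q,
      IsIrreducibleRep F (subRep F ρ q hq) ∧ RepIso F (subRep F ρ q hq) σ}

/-- The set of all homogeneous components of a representation. -/
noncomputable def homComponents {G : Type*} [Monoid G] {V : Type*} [AddCommMonoid V]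
    [Module F V] (ρ : Representation F G V) : Set (Submodule F V) :=
  {S | ∃ (q : Submodule F V) (hq : ∀ g : G, ∀ v ∈ q, ρ g v ∈ q),
      IsIrreducibleRep F (subRep F ρ q hq) ∧ S = homComponent F ρ (subRep F ρ q hq)}

/-- A representation `ρ` lies over `σ` if it admits an invariant submodule whose
subrepresentation is isomorphic to `σ`. -/
def LiesOver {G : Type*} [Monoid G] {V W : Type*} [AddCommMonoid V] [Module F V]
    [AddCommMonoid W] [Module F W] (ρ : Representation F G V) (σ : Representation F G W) :
    Prop :=
  ∃ (q : Submodule F V) (hq : ∀ g : G, ∀ v ∈ q, ρ g v ∈ q),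
    RepIso F (subRep F ρ q hq) σ

/-- The stabilizer in `G` of a subspace of a representation space. -/
def stabSubgroup {G : Type*} [Group G] {V : Type*} [AddCommGroup V] [Module F V]
    (ρ : Representation F G V) (S : Submodule F V) : Subgroup G where
  carrier := {g : G | S.map (ρ g) = S}
  one_mem' := by
    show S.map (ρ 1) = S
    rw [map_one, Module.End.one_eq_id]
    exact Submodule.map_id S
  mul_mem' := by
    intro a b ha hb
    show S.map (ρ (a * b)) = S
    rw [map_mul, Module.End.mul_eq_comp, Submodule.map_comp, hb, ha]
  inv_mem' := by
    intro a ha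
    show S.map (ρ a⁻¹) = S
    conv_lhs => rw [← ha]
    rw [← Submodule.map_comp, ← Module.End.mul_eq_comp, ← map_mul, inv_mul_cancel, map_one,
      Module.End.one_eq_id, Submodule.map_id]

theorem stabSubgroup_mapsTo {G : Type*} [Group G] {V : Type*} [AddCommGroup V] [Module F V]
    (ρ : Representation F G V) (S : Submodule F V) :
    ∀ g : ↥(stabSubgroup F ρ S), ∀ v ∈ S, ρ (g : G) v ∈ S := by
  intro g v hv
  have hg : S.map (ρ (g : G)) = S := g.2
  have := Submodule.mem_map_of_mem (f := ρ (g : G)) hv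
  rwa [hg] at this

/-- Outer tensor product of representations of two groups. -/
noncomputable def outerRep {G₁ G₂ : Type*} [Monoid G₁] [Monoid G₂] {V₁ V₂ : Type*}
    [AddCommMonoid V₁] [Module F V₁] [AddCommMonoid V₂] [Module F V₂]
    (ρ₁ : Representation F G₁ V₁) (ρ₂ : Representation F G₂ V₂) :
    Representation F (G₁ × G₂) (V₁ ⊗[F] V₂) :=
  Representation.tprod (ρ₁.comp (MonoidHom.fst G₁ G₂)) (ρ₂.comp (MonoidHom.snd G₁ G₂))

/-- A projective representation with factor set `α`. -/
def IsProjRep {G : Type*} [Group G] {W : Type*} [AddCommGroup W] [Module F W]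
    (X : G → (W →ₗ[F] W)) (α : G → G → Fˣ) : Prop :=
  (∀ g : G, Function.Bijective (X g)) ∧
    ∀ g₁ g₂ : G, (X g₁) ∘ₗ (X g₂) = ((α g₁ g₂ : F)) • X (g₁ * g₂)

/-- Irreducibility of a projective representation: no proper nonzero invariant subspace. -/
def IsProjIrred {G : Type*} [Group G] {W : Type*} [AddCommGroup W] [Module F W]
    (X : G → (W →ₗ[F] W)) : Prop :=
  Nontrivial W ∧ ∀ p : Submodule F W, (∀ g : G, ∀ w ∈ p, X g w ∈ p) → p = ⊥ ∨ p = ⊤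

/-- `D` is a system of representatives for the `(H₁,H₂)`-double cosets in `G`. -/
def IsDCosetReps {G : Type*} [Group G] (H₁ H₂ : Subgroup G) (D : Set G) : Prop :=
  ∀ g : G, ∃! d : G, d ∈ D ∧ ∃ h₁ ∈ H₁, ∃ h₂ ∈ H₂, g = h₁ * d * h₂

end Preliminaries

section Induction

variable (F : Type*) [Field F] {G : Type*} [Group G] (H : Subgroup G)
variable {W : Type*} [AddCommGroup W] [Module F W] (σ : Representation F ↥H W)

/-- The submodule of relations defining the induced module `FG ⊗_{FH} W` as a quotient
of `FG ⊗_F W`. -/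
noncomputable def indRel : Submodule (MonoidAlgebra F G) (MonoidAlgebra F G ⊗[F] W) :=
  Submodule.span (MonoidAlgebra F G)
    {z | ∃ (x : H) (w : W),
      z = (MonoidAlgebra.single (x : G) (1 : F)) ⊗ₜ[F] w
            - (1 : MonoidAlgebra F G) ⊗ₜ[F] (σ x w)}

/-- The underlying space of the induced module `ind_H^G W = FG ⊗_{FH} W`. -/
noncomputable def IndCar := (MonoidAlgebra F G ⊗[F] W) ⧸ indRel F H σ

noncomputable instance : AddCommGroup (IndCar F H σ) :=
  inferInstanceAs (AddCommGroup ((MonoidAlgebra F G ⊗[F] W) ⧸ indRel F H σ))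

noncomputable instance : Module (MonoidAlgebra F G) (IndCar F H σ) :=
  inferInstanceAs (Module (MonoidAlgebra F G) ((MonoidAlgebra F G ⊗[F] W) ⧸ indRel F H σ))

noncomputable instance : Module F (IndCar F H σ) :=
  inferInstanceAs (Module F ((MonoidAlgebra F G ⊗[F] W) ⧸ indRel F H σ))

noncomputable instance : IsScalarTower F (MonoidAlgebra F G) (IndCar F H σ) :=
  inferInstanceAs (IsScalarTower F (MonoidAlgebra F G)
    ((MonoidAlgebra F G ⊗[F] W) ⧸ indRel F H σ))

/-- The induced representation of `G` on `ind_H^G W = FG ⊗_{FH} W`. -/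
noncomputable def IndRep : Representation F G (IndCar F H σ) where
  toFun g :=
    { toFun := fun v => (MonoidAlgebra.single g (1 : F) : MonoidAlgebra F G) • v
      map_add' := fun a b => smul_add _ a b
      map_smul' := fun c v => smul_comm _ c v }
  map_one' := by
    ext v
    show MonoidAlgebra.single (1 : G) (1 : F) • v = v
    rw [← MonoidAlgebra.one_def, one_smul]
  map_mul' g₁ g₂ := by
    ext v
    show MonoidAlgebra.single (g₁ * g₂) (1 : F) • v = _
    rw [show (MonoidAlgebra.single (g₁ * g₂) (1 : F) : MonoidAlgebra F G)
          = MonoidAlgebra.single g₁ 1 * MonoidAlgebra.single g₂ 1 by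
        rw [MonoidAlgebra.single_mul_single, one_mul], mul_smul]
    rfl

end Induction

section DirectSums

variable (F : Type*) [Field F] {G : Type*} [Monoid G]

/-- The direct sum of a family of representations. -/
noncomputable def dsumRep {ι : Type*} {V : ι → Type*} [∀ i, AddCommGroup (V i)]
    [∀ i, Module F (V i)] (ρ : ∀ i, Representation F G (V i)) :
    Representation F G (⨁ i, V i) where
  toFun g := DFinsupp.mapRange.linearMap (fun i => ρ i g)
  map_one' := by
    simp only [map_one]
    exact DFinsupp.mapRange.linearMap_id
  map_mul' g₁ g₂ := by
    simp only [map_mul, Module.End.mul_eq_comp]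
    exact DFinsupp.mapRange.linearMap_comp (fun i => ρ i g₁) (fun i => ρ i g₂)

end DirectSums

section Conjugation

variable {G : Type*} [Group G]

/-- Conjugation `x ↦ g x g⁻¹` as a monoid homomorphism of a normal subgroup. -/
def conjHom {N : Subgroup G} (hN : N.Normal) (g : G) : ↥N →* ↥N where
  toFun x := ⟨g * (x : G) * g⁻¹, hN.conj_mem x.1 x.2 g⟩
  map_one' := by ext; simp
  map_mul' x y := by ext; simp [mul_assoc]

/-- The conjugate subgroup `xHx⁻¹`. -/
def conjSubgroup (x : G) (H : Subgroup G) : Subgroup G :=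
  H.map (MulAut.conj x).toMonoidHom

/-- Conjugating back: the homomorphism `K → H`, `k ↦ x⁻¹ k x`, for `K ≤ xHx⁻¹`. -/
def unconjHom (x : G) (H : Subgroup G) {K : Subgroup G} (hK : K ≤ conjSubgroup x H) :
    ↥K →* ↥H where
  toFun k := ⟨x⁻¹ * (k : G) * x, by
    obtain ⟨h, hh, e⟩ := hK k.2
    have : x⁻¹ * (k : G) * x = h := by
      rw [← e]; simp [MulAut.conj_apply, mul_assoc]
    rw [this]; exact hh⟩
  map_one' := by ext; simp
  map_mul' a b := by
    ext
    show x⁻¹ * (↑a * ↑b) * x = (x⁻¹ * ↑a * x) * (x⁻¹ * ↑b * x)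
    group

/-- The homomorphism `K ∩ xHx⁻¹ → H` (with the source regarded as a subgroup of `K`),
given by `k ↦ x⁻¹ k x`. -/
def mackeyHom (x : G) (H K : Subgroup G) :
    ↥((K ⊓ conjSubgroup x H).subgroupOf K) →* ↥H where
  toFun l := ⟨x⁻¹ * ((l : ↥K) : G) * x, by
    have h2 : ((l : ↥K) : G) ∈ K ⊓ conjSubgroup x H := l.2
    obtain ⟨h, hh, e⟩ := h2.2
    have : x⁻¹ * ((l : ↥K) : G) * x = h := by
      rw [← e]; simp [MulAut.conj_apply, mul_assoc]
    rw [this]; exact hh⟩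
  map_one' := by ext; simp
  map_mul' a b := by
    ext
    show x⁻¹ * (↑↑a * ↑↑b) * x = (x⁻¹ * ↑↑a * x) * (x⁻¹ * ↑↑b * x)
    group

end Conjugation


/-!
Clifford's argument. If `V` is an irreducible `FG`-module containing a copy `Y` of `W`, its
restriction to `N` is spanned by the translates `gY`, and `gY` is a copy of the conjugate of
`W` by `g⁻¹`. In a sum of irreducible submodules every irreducible submodule is isomorphic to a
summand (pass to a quotient by a maximal invariant submodule avoiding it), so the
`W`-homogeneous component `M` of `V` is the sum of the `tY` with `t ∈ T`. Hence `M` is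
`T`-stable, and it is `T`-irreducible since every nonzero `T`-submodule contains a copy `Y'`
of `W` whose `T`-translates span `M` again. The same description applies to `ind_T^G S` for
an irreducible `FT`-module `S` over `W`: it is spanned by the `G`-translates of `1 ⊗ S`, whose
`T`-translates make up the `W`-homogeneous component `1 ⊗ S ≅ S`. A nonzero `G`-submodule
contains a conjugate of a copy of `W`, hence a copy of `W`, so it meets `1 ⊗ S` and contains
it; thus `ind_T^G S` is irreducible, and for `V` as above the map `ind_T^G M → V` is a nonzero
map between irreducible modules.
-/

namespace RepIso

variable {F : Type*} [Field F] {G : Type*} [Monoid G] {V V' V'' : Type*}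
  [AddCommGroup V] [Module F V] [AddCommGroup V'] [Module F V'] [AddCommGroup V''] [Module F V'']
  {ρ : Representation F G V} {ρ' : Representation F G V'} {ρ'' : Representation F G V''}

theorem symm (h : RepIso F ρ ρ') : RepIso F ρ' ρ := by
  obtain ⟨e, he⟩ := h
  exact ⟨e.symm, fun g v => e.injective (by rw [e.apply_symm_apply, he, e.apply_symm_apply])⟩

theorem trans (h : RepIso F ρ ρ') (h' : RepIso F ρ' ρ'') : RepIso F ρ ρ'' := by
  obtain ⟨e, he⟩ := h
  obtain ⟨e', he'⟩ := h'
  exact ⟨e.trans e', fun g v => by simp [he, he']⟩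

theorem comp {H : Type*} [Monoid H] (h : RepIso F ρ ρ') (f : H →* G) :
    RepIso F (ρ.comp f) (ρ'.comp f) := by
  obtain ⟨e, he⟩ := h
  exact ⟨e, fun g v => he (f g) v⟩

theorem isIrreducibleRep (h : RepIso F ρ ρ') (hρ : IsIrreducibleRep F ρ) :
    IsIrreducibleRep F ρ' := by
  obtain ⟨e, he⟩ := h
  have := hρ.1
  refine ⟨e.symm.toEquiv.nontrivial, fun p hp => ?_⟩
  have hmap : (p.comap (e : V →ₗ[F] V')).map (e : V →ₗ[F] V') = p :=
    Submodule.map_comap_eq_of_surjective e.surjective p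
  rcases hρ.2 (p.comap (e : V →ₗ[F] V')) fun g v hv => by simpa [he] using hp g _ hv with
    h | h
  · left; rw [← hmap, h, Submodule.map_bot]
  · right; rw [← hmap, h, Submodule.map_top, e.range]

end RepIso

namespace Clifford

section Submodules

variable {F : Type*} [Field F] {G : Type*} [Monoid G] {V V' W : Type*}
  [AddCommGroup V] [Module F V] [AddCommGroup V'] [Module F V'] [AddCommGroup W] [Module F W]

abbrev IsInvariant (ρ : Representation F G V) (p : Submodule F V) : Prop :=
  ∀ g : G, ∀ v ∈ p, ρ g v ∈ p

def IsIrreducibleSubmodule (ρ : Representation F G V) (p : Submodule F V) : Prop :=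
  ∃ hp : IsInvariant ρ p, IsIrreducibleRep F (subRep F ρ p hp)

-- `homComponent F ρ σ` is by definition the supremum of the submodules affording `σ`.
def Affords (ρ : Representation F G V) (p : Submodule F V) (σ : Representation F G W) : Prop :=
  ∃ hp : IsInvariant ρ p,
    IsIrreducibleRep F (subRep F ρ p hp) ∧ RepIso F (subRep F ρ p hp) σ

variable {ρ : Representation F G V} {ρ' : Representation F G V'} {σ : Representation F G W}

theorem isIrreducibleRep_subRep_iff {q : Submodule F V} (hq : IsInvariant ρ q) :
    IsIrreducibleRep F (subRep F ρ q hq) ↔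
      q ≠ ⊥ ∧ ∀ p ≤ q, IsInvariant ρ p → p = ⊥ ∨ p = q := by
  rw [IsIrreducibleRep, Submodule.nontrivial_iff_ne_bot]
  refine and_congr_right fun _ => ⟨fun h p hpq hp => ?_, fun h p' hp' => ?_⟩
  · have hmap : (p.comap q.subtype).map q.subtype = p := by
      rw [Submodule.map_comap_subtype, inf_eq_right.mpr hpq]
    rcases h (p.comap q.subtype) (fun g v hv => hp g _ hv) with h | h
    · left; rw [← hmap, h, Submodule.map_bot]
    · right; rw [← hmap, h, Submodule.map_top, Submodule.range_subtype]
  · have hle : p'.map q.subtype ≤ q := Submodule.map_subtype_le q p'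
    rcases h _ hle (by rintro g _ ⟨w, hw, rfl⟩; exact ⟨_, hp' g w hw, rfl⟩) with h | h
    · left
      exact Submodule.map_injective_of_injective q.injective_subtype
        (h.trans (Submodule.map_bot _).symm)
    · right
      rw [← Submodule.comap_map_eq_of_injective q.injective_subtype p', h,
        Submodule.comap_subtype_self]

theorem _root_.IsIrreducibleRep.ne_bot {q : Submodule F V} {hq : IsInvariant ρ q}
    (h : IsIrreducibleRep F (subRep F ρ q hq)) : q ≠ ⊥ :=
  ((isIrreducibleRep_subRep_iff hq).mp h).1

theorem _root_.IsIrreducibleRep.eq_bot_or_eq_of_le {q : Submodule F V} {hq : IsInvariant ρ q}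
    (h : IsIrreducibleRep F (subRep F ρ q hq)) {p : Submodule F V} (hpq : p ≤ q)
    (hp : IsInvariant ρ p) : p = ⊥ ∨ p = q :=
  ((isIrreducibleRep_subRep_iff hq).mp h).2 p hpq hp

theorem _root_.IsIrreducibleRep.comp_of_surjective {H : Type*} [Monoid H]
    (hρ : IsIrreducibleRep F ρ) {f : H →* G} (hf : Function.Surjective f) :
    IsIrreducibleRep F (ρ.comp f) :=
  ⟨hρ.1, fun p hp => hρ.2 p fun g v hv => by
    obtain ⟨h, rfl⟩ := hf g
    exact hp h v hv⟩

theorem repIso_subRep_of_eq {p q : Submodule F V} (h : p = q) (hp : IsInvariant ρ p)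
    (hq : IsInvariant ρ q) : RepIso F (subRep F ρ p hp) (subRep F ρ q hq) :=
  ⟨LinearEquiv.ofEq p q h, fun _ _ => rfl⟩

theorem isInvariant_sSup {S : Set (Submodule F V)} (h : ∀ p ∈ S, IsInvariant ρ p) :
    IsInvariant ρ (sSup S) := fun g =>
  show sSup S ≤ (sSup S).comap (ρ g) from
    sSup_le fun p hp => le_trans (h p hp g) (Submodule.comap_mono (le_sSup hp))

theorem IsInvariant.sup {p q : Submodule F V} (hp : IsInvariant ρ p) (hq : IsInvariant ρ q) :
    IsInvariant ρ (p ⊔ q) := fun g =>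
  show p ⊔ q ≤ (p ⊔ q).comap (ρ g) from
    sup_le (le_trans (hp g) (Submodule.comap_mono le_sup_left))
      (le_trans (hq g) (Submodule.comap_mono le_sup_right))

theorem isInvariant_iSup_map (ρ : Representation F G V) (Y : Submodule F V) :
    IsInvariant ρ (⨆ g, Y.map (ρ g)) := fun g =>
  show ⨆ g', Y.map (ρ g') ≤ (⨆ g', Y.map (ρ g')).comap (ρ g) from iSup_le fun g' => by
    rw [← Submodule.map_le_iff_le_comap, ← Submodule.map_comp, ← Module.End.mul_eq_comp,
      ← map_mul]
    exact le_iSup (fun g' => Y.map (ρ g')) (g * g')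

theorem iSup_map_le {R X : Submodule F V} (hX : IsInvariant ρ X) (hRX : R ≤ X) :
    ⨆ g, R.map (ρ g) ≤ X :=
  iSup_le fun g => Submodule.map_le_iff_le_comap.mpr (hRX.trans (hX g))

theorem iSup_map_eq_top (hρ : IsIrreducibleRep F ρ) {Y : Submodule F V} (hY : Y ≠ ⊥) :
    ⨆ g, Y.map (ρ g) = ⊤ := by
  refine (hρ.2 _ (isInvariant_iSup_map ρ Y)).resolve_left fun h => hY ?_
  rw [eq_bot_iff, ← h]
  simpa [Module.End.one_eq_id] using le_iSup (fun g => Y.map (ρ g)) 1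

section Pushforward

variable (f : V →ₗ[F] V') {q : Submodule F V}
  (hf : ∀ g : G, ∀ v ∈ q, f (ρ g v) = ρ' g (f v))
include hf

theorem IsInvariant.map (hq : IsInvariant ρ q) : IsInvariant ρ' (q.map f) := by
  rintro g _ ⟨w, hw, rfl⟩
  exact ⟨ρ g w, hq g w hw, hf g w hw⟩

theorem repIso_subRep_map (hq : IsInvariant ρ q) (hinj : Disjoint q (LinearMap.ker f)) :
    RepIso F (subRep F ρ q hq) (subRep F ρ' (q.map f) (hq.map f hf)) := by
  have hinj' : Function.Injective (f.submoduleMap q) := by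
    refine (injective_iff_map_eq_zero _).mpr fun v hv => Subtype.ext ?_
    exact Submodule.disjoint_def.mp hinj v v.2 (congrArg Subtype.val hv)
  exact ⟨LinearEquiv.ofBijective _ ⟨hinj', f.submoduleMap_surjective q⟩,
    fun g v => Subtype.ext (hf g v v.2)⟩

theorem disjoint_ker_of_isIrreducibleRep {hq : IsInvariant ρ q}
    (hirr : IsIrreducibleRep F (subRep F ρ q hq)) (hne : q.map f ≠ ⊥) :
    Disjoint q (LinearMap.ker f) := by
  have hinv : IsInvariant ρ (q ⊓ LinearMap.ker f) := fun g v hv =>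
    ⟨hq g v hv.1, show f (ρ g v) = 0 by rw [hf g v hv.1, LinearMap.mem_ker.mp hv.2, map_zero]⟩
  rcases hirr.eq_bot_or_eq_of_le inf_le_left hinv with h | h
  · exact disjoint_iff.mpr h
  · exact absurd (LinearMap.le_ker_iff_map.mp (inf_eq_left.mp h)) hne

end Pushforward

end Submodules


section Semisimple

variable {F : Type*} [Field F] {G : Type*} [Monoid G] {V V' W W' : Type*}
  [AddCommGroup V] [Module F V] [AddCommGroup V'] [Module F V'] [AddCommGroup W] [Module F W]
  [AddCommGroup W'] [Module F W']
  {ρ : Representation F G V} {ρ' : Representation F G V'} {σ : Representation F G W}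
  {σ' : Representation F G W'}

theorem Affords.trans {q : Submodule F V} (h : Affords ρ q σ) (e : RepIso F σ σ') :
    Affords ρ q σ' :=
  let ⟨hq, hirr, e'⟩ := h
  ⟨hq, hirr, e'.trans e⟩

theorem Affords.repIso {q : Submodule F V} (h : Affords ρ q σ) (h' : Affords ρ q σ') :
    RepIso F σ σ' :=
  let ⟨_, _, e⟩ := h
  let ⟨_, _, e'⟩ := h'
  e.symm.trans e'

theorem affords_of_repIso (hσ : IsIrreducibleRep F σ) {q : Submodule F V}
    (hq : IsInvariant ρ q) (e : RepIso F (subRep F ρ q hq) σ) : Affords ρ q σ :=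
  ⟨hq, e.symm.isIrreducibleRep hσ, e⟩

theorem Affords.isIrreducibleSubmodule {q : Submodule F V} (h : Affords ρ q σ) :
    IsIrreducibleSubmodule ρ q :=
  let ⟨hq, hirr, _⟩ := h
  ⟨hq, hirr⟩

theorem IsIrreducibleSubmodule.affords {p : Submodule F V} (h : IsIrreducibleSubmodule ρ p) :
    ∃ hp : IsInvariant ρ p, Affords ρ p (subRep F ρ p hp) :=
  let ⟨hp, hirr⟩ := h
  ⟨hp, hp, hirr, ⟨LinearEquiv.refl F p, fun _ _ => rfl⟩⟩

theorem Affords.liesOver {q : Submodule F V} (h : Affords ρ q σ) : LiesOver F ρ σ :=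
  ⟨q, h.1, h.2.2⟩

theorem _root_.LiesOver.exists_affords (hσ : IsIrreducibleRep F σ) (h : LiesOver F ρ σ) :
    ∃ q, Affords ρ q σ :=
  let ⟨q, hq, e⟩ := h
  ⟨q, affords_of_repIso hσ hq e⟩

theorem liesOver_subRep_of_affords {q M : Submodule F V} (hq : Affords ρ q σ) (hqM : q ≤ M)
    (hM : IsInvariant ρ M) : LiesOver F (subRep F ρ M hM) σ := by
  obtain ⟨hqinv, -, e⟩ := hq
  have hmap : (q.comap M.subtype).map M.subtype = q := by
    rw [Submodule.map_comap_subtype, inf_eq_right.mpr hqM]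
  have hinv : IsInvariant (subRep F ρ M hM) (q.comap M.subtype) := fun g v hv => hqinv g _ hv
  refine ⟨_, hinv, ((repIso_subRep_map M.subtype (fun _ _ _ => rfl) hinv ?_).trans
    (repIso_subRep_of_eq hmap _ hqinv)).trans e⟩
  rw [Submodule.ker_subtype]
  exact disjoint_bot_right

theorem repIso_of_ne_zero {f : V →ₗ[F] V'} (hf : ∀ g v, f (ρ g v) = ρ' g (f v))
    (hρ : IsIrreducibleRep F ρ) (hρ' : IsIrreducibleRep F ρ') (hf0 : f ≠ 0) :
    RepIso F ρ ρ' := by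
  have hker := hρ.2 (LinearMap.ker f) fun g v hv => by
    rw [LinearMap.mem_ker, hf, LinearMap.mem_ker.mp hv, map_zero]
  have hrange := hρ'.2 (LinearMap.range f) fun g _ ⟨v, hv⟩ => ⟨ρ g v, hv ▸ hf g v⟩
  rw [LinearMap.ker_eq_top, LinearMap.ker_eq_bot] at hker
  rw [LinearMap.range_eq_bot, LinearMap.range_eq_top] at hrange
  exact ⟨LinearEquiv.ofBijective f ⟨hker.resolve_right hf0, hrange.resolve_left hf0⟩, hf⟩

theorem Affords.le_homComponent {q : Submodule F V} (h : Affords ρ q σ) :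
    q ≤ homComponent F ρ σ :=
  le_sSup h

theorem isInvariant_homComponent : IsInvariant ρ (homComponent F ρ σ) :=
  isInvariant_sSup fun _ ⟨hp, _⟩ => hp

theorem Affords.map {q : Submodule F V} (h : Affords ρ q σ) (f : V →ₗ[F] V')
    (hf : ∀ g : G, ∀ v ∈ q, f (ρ g v) = ρ' g (f v)) (hinj : Disjoint q (LinearMap.ker f)) :
    Affords ρ' (q.map f) σ :=
  let ⟨hq, hirr, e⟩ := h
  let e' := repIso_subRep_map f hf hq hinj
  ⟨hq.map f hf, e'.isIrreducibleRep hirr, e'.symm.trans e⟩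

theorem Affords.map_of_ne_bot {q : Submodule F V} (h : Affords ρ q σ) (f : V →ₗ[F] V')
    (hf : ∀ g : G, ∀ v ∈ q, f (ρ g v) = ρ' g (f v)) (hne : q.map f ≠ ⊥) :
    Affords ρ' (q.map f) σ :=
  h.map f hf (disjoint_ker_of_isIrreducibleRep f hf h.2.1 hne)

theorem exists_isInvariant_disjoint_sSup_le_sup {S : Set (Submodule F V)}
    (hS : ∀ p ∈ S, IsIrreducibleSubmodule ρ p) {U : Submodule F V} (hU : IsInvariant ρ U) :
    ∃ C, IsInvariant ρ C ∧ Disjoint U C ∧ sSup S ≤ U ⊔ C := by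
  obtain ⟨C, ⟨hC, hUC⟩, hmax⟩ := zorn_le₀ {C | IsInvariant ρ C ∧ Disjoint U C}
    fun c hc hchain => ⟨sSup c, ⟨isInvariant_sSup fun p hp => (hc hp).1,
      hchain.directedOn.disjoint_sSup_right.mpr fun p hp => (hc hp).2⟩, fun _ => le_sSup⟩
  refine ⟨C, hC, hUC, sSup_le fun p hp => ?_⟩
  obtain ⟨hp, hirr⟩ := hS p hp
  rcases hirr.eq_bot_or_eq_of_le (inf_le_left : p ⊓ (U ⊔ C) ≤ p)
    (fun g v hv => ⟨hp g v hv.1, (hU.sup hC) g v hv.2⟩) with h | h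
  · have hdisj : Disjoint U (C ⊔ p) := by
      rw [disjoint_iff, eq_bot_iff]
      calc U ⊓ (C ⊔ p) ≤ U ⊓ ((C ⊔ p) ⊓ (U ⊔ C)) := le_inf inf_le_left
              (le_inf inf_le_right (inf_le_left.trans le_sup_left))
        _ = U ⊓ C := by rw [sup_inf_assoc_of_le p le_sup_right, h, sup_bot_eq]
        _ = ⊥ := disjoint_iff.mp hUC
    have := hmax ⟨hC.sup hp, hdisj⟩ le_sup_left
    exact (le_sup_right.trans this).trans le_sup_right
  · exact h ▸ inf_le_right

theorem affords_inf_comap {f : V →ₗ[F] V'} (hf : ∀ g : G, ∀ v, f (ρ g v) = ρ' g (f v))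
    {U : Submodule F V} (hU : IsInvariant ρ U) (hUf : Disjoint U (LinearMap.ker f))
    {P : Submodule F V'} (hP : Affords ρ' P σ) (hPU : P ≤ U.map f) :
    Affords ρ (U ⊓ P.comap f) σ := by
  obtain ⟨hPinv, hPirr, eP⟩ := hP
  have hinv : IsInvariant ρ (U ⊓ P.comap f) := fun g v hv =>
    ⟨hU g v hv.1, show f (ρ g v) ∈ P by rw [hf]; exact hPinv g _ hv.2⟩
  have hmap : (U ⊓ P.comap f).map f = P := by
    refine le_antisymm ((Submodule.map_inf_le f).trans (inf_le_right.trans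
      (Submodule.map_comap_le f P))) fun x hx => ?_
    obtain ⟨u, hu, rfl⟩ := hPU hx
    exact ⟨u, ⟨hu, hx⟩, rfl⟩
  have e := (repIso_subRep_map f (fun g v _ => hf g v) hinv (hUf.mono_left inf_le_left)).trans
    (repIso_subRep_of_eq hmap _ hPinv)
  exact ⟨hinv, e.symm.isIrreducibleRep hPirr, e.trans eP⟩

theorem exists_affords_le {S : Set (Submodule F V)} (hS : ∀ p ∈ S, IsIrreducibleSubmodule ρ p)
    {U : Submodule F V} (hU : IsInvariant ρ U) (hUS : U ≤ sSup S) (hU0 : U ≠ ⊥) :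
    ∃ q ≤ U, ∃ p ∈ S, ∃ hp : IsInvariant ρ p, Affords ρ q (subRep F ρ p hp) := by
  -- modulo a maximal invariant `C` disjoint from `U`, the image of `U` contains a copy of a
  -- summand, which pulls back to `U`
  obtain ⟨C, hC, hUC, hSUC⟩ := exists_isInvariant_disjoint_sSup_le_sup hS hU
  have hf : ∀ g : G, ∀ v, C.mkQ (ρ g v) = ρ.quotient C hC g (C.mkQ v) := fun _ _ => rfl
  obtain ⟨p, hpS, hpC⟩ : ∃ p ∈ S, p.map C.mkQ ≠ ⊥ := by
    by_contra! h
    have hSC : sSup S ≤ C := sSup_le fun p hp => by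
      simpa using LinearMap.le_ker_iff_map.mpr (h p hp)
    exact hU0 (eq_bot_iff.mpr fun v hv => Submodule.disjoint_def.mp hUC v hv (hSC (hUS hv)))
  obtain ⟨hp, hpp⟩ := (hS p hpS).affords
  have hP := hpp.map_of_ne_bot C.mkQ (fun g v _ => hf g v) hpC
  refine ⟨_, inf_le_left, p, hpS, hp, affords_inf_comap hf hU (by simpa using hUC) hP ?_⟩
  calc p.map C.mkQ ≤ (U ⊔ C).map C.mkQ := Submodule.map_mono ((le_sSup hpS).trans hSUC)
    _ = U.map C.mkQ := by rw [Submodule.map_sup, Submodule.mkQ_map_self, sup_bot_eq]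

theorem Affords.exists_mem_affords {S : Set (Submodule F V)}
    (hS : ∀ p ∈ S, IsIrreducibleSubmodule ρ p) {q : Submodule F V} (hq : Affords ρ q σ)
    (hqS : q ≤ sSup S) : ∃ p ∈ S, Affords ρ p σ := by
  obtain ⟨r, hrq, p, hpS, hp, hr⟩ := exists_affords_le hS hq.1 hqS hq.2.1.ne_bot
  obtain rfl : r = q := (hq.2.1.eq_bot_or_eq_of_le hrq hr.1).resolve_left hr.2.1.ne_bot
  obtain ⟨_, hpp⟩ := (hS p hpS).affords
  exact ⟨p, hpS, hpp.trans (hr.repIso hq)⟩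

theorem homComponent_eq_sSup {S : Set (Submodule F V)}
    (hS : ∀ p ∈ S, IsIrreducibleSubmodule ρ p) (hsup : sSup S = ⊤) :
    homComponent F ρ σ = sSup {p | p ∈ S ∧ Affords ρ p σ} := by
  set A := sSup {p | p ∈ S ∧ Affords ρ p σ}
  have hA : IsInvariant ρ A := isInvariant_sSup fun p hp => hp.2.1
  refine le_antisymm (sSup_le fun q hq => ?_) (sSup_le_sSup fun p hp => hp.2)
  -- otherwise the image of `q` in `V ⧸ A` is a copy of `σ` inside the sum of the images of the
  -- summands, one of which must then afford `σ` and so lie in `A`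
  by_contra hqA
  have hf : ∀ g : G, ∀ v, A.mkQ (ρ g v) = ρ.quotient A hA g (A.mkQ v) := fun _ _ => rfl
  have hQ : Affords (ρ.quotient A hA) (q.map A.mkQ) σ :=
    Affords.map_of_ne_bot hq _ (fun g v _ => hf g v)
    (by rwa [ne_eq, ← LinearMap.le_ker_iff_map, Submodule.ker_mkQ])
  set S' := (·.map A.mkQ) '' {p | p ∈ S ∧ p.map A.mkQ ≠ ⊥}
  have hS' : ∀ p' ∈ S', IsIrreducibleSubmodule (ρ.quotient A hA) p' := by
    rintro _ ⟨p, ⟨hpS, hp0⟩, rfl⟩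
    obtain ⟨hp, hpp⟩ := (hS p hpS).affords
    exact (hpp.map_of_ne_bot _ (fun g v _ => hf g v) hp0).isIrreducibleSubmodule
  have hQS' : q.map A.mkQ ≤ sSup S' := by
    refine Submodule.map_le_iff_le_comap.mpr (le_top.trans (hsup ▸ sSup_le fun p hpS => ?_))
    by_cases hp0 : p.map A.mkQ = ⊥
    · exact (LinearMap.le_ker_iff_map.mpr hp0).trans (Submodule.comap_mono bot_le)
    · exact Submodule.map_le_iff_le_comap.mp (le_sSup ⟨p, ⟨hpS, hp0⟩, rfl⟩)
  obtain ⟨_, ⟨p, ⟨hpS, hp0⟩, rfl⟩, hpσ⟩ := hQ.exists_mem_affords hS' hQS'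
  obtain ⟨hp, hpp⟩ := (hS p hpS).affords
  have hpA : p ≤ A :=
    le_sSup ⟨hpS, hpp.trans ((hpp.map_of_ne_bot _ (fun g v _ => hf g v) hp0).repIso hpσ)⟩
  exact hp0 (by rw [← LinearMap.le_ker_iff_map, Submodule.ker_mkQ]; exact hpA)

end Semisimple

section TensorLift

variable {F : Type*} [Field F] {G : Type*} {S V : Type*} [AddCommGroup S] [Module F S]
  [AddCommGroup V] [Module F V]

noncomputable def indDescAux (φ : G → S →ₗ[F] V) : MonoidAlgebra F G ⊗[F] S →ₗ[F] V :=
  TensorProduct.lift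
    (Finsupp.linearCombination F φ ∘ₗ (MonoidAlgebra.coeffLinearEquiv F).toLinearMap)

theorem indDescAux_single (φ : G → S →ₗ[F] V) (g : G) (c : F) (s : S) :
    indDescAux φ (MonoidAlgebra.single g c ⊗ₜ[F] s) = c • φ g s := by
  simp [indDescAux, MonoidAlgebra.coeff_single]

end TensorLift

section Induction

variable {F : Type*} [Field F] {G : Type*} [Group G] {H : Subgroup G}
  {S : Type*} [AddCommGroup S] [Module F S] (τ : Representation F H S)
  {V : Type*} [AddCommGroup V] [Module F V]

noncomputable def indMk (g : G) : S →ₗ[F] IndCar F H τ :=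
  ((indRel F H τ).mkQ.restrictScalars F ∘ₗ
    TensorProduct.mk F (MonoidAlgebra F G) S (MonoidAlgebra.single g 1) :
      S →ₗ[F] (MonoidAlgebra F G ⊗[F] S) ⧸ indRel F H τ)

theorem indMk_apply (g : G) (s : S) :
    indMk τ g s = (indRel F H τ).mkQ (MonoidAlgebra.single g 1 ⊗ₜ[F] s) := rfl

theorem indMk_mul (g : G) (h : H) (s : S) : indMk τ (g * h) s = indMk τ g (τ h s) := by
  rw [indMk_apply, indMk_apply, Submodule.mkQ_apply, Submodule.mkQ_apply]
  apply (Submodule.Quotient.eq _).mpr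
  have : MonoidAlgebra.single (g * h) (1 : F) ⊗ₜ[F] s -
      MonoidAlgebra.single g 1 ⊗ₜ[F] τ h s = MonoidAlgebra.single g (1 : F) •
        (MonoidAlgebra.single (h : G) 1 ⊗ₜ[F] s -
          (1 : MonoidAlgebra F G) ⊗ₜ[F] τ h s) := by
    rw [smul_sub, TensorProduct.smul_tmul', TensorProduct.smul_tmul', smul_eq_mul,
      smul_eq_mul, MonoidAlgebra.single_mul_single, one_mul, mul_one]
  rw [this]
  exact Submodule.smul_mem _ _ (Submodule.subset_span ⟨h, s, rfl⟩)

theorem indRep_indMk (g g' : G) (s : S) :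
    IndRep F H τ g (indMk τ g' s) = indMk τ (g * g') s := by
  change MonoidAlgebra.single g (1 : F) •
    (indRel F H τ).mkQ (MonoidAlgebra.single g' 1 ⊗ₜ[F] s) = _
  rw [← map_smul, TensorProduct.smul_tmul', smul_eq_mul, MonoidAlgebra.single_mul_single,
    one_mul]
  rfl

theorem indMk_one_apply (h : H) (s : S) :
    indMk τ 1 (τ h s) = IndRep F H τ h (indMk τ 1 s) := by
  rw [indRep_indMk, ← indMk_mul, mul_one, one_mul]

theorem iSup_range_indMk : ⨆ g : G, LinearMap.range (indMk τ g) = ⊤ := by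
  rw [eq_top_iff]
  rintro z -
  obtain ⟨w, rfl⟩ := (indRel F H τ).mkQ_surjective z
  induction w using TensorProduct.induction_on with
  | zero => rw [map_zero]; exact zero_mem _
  | add x y hx hy => rw [map_add]; exact add_mem hx hy
  | tmul a s =>
    induction a using MonoidAlgebra.induction_linear with
    | zero => rw [TensorProduct.zero_tmul, map_zero]; exact zero_mem _
    | add a b ha hb => rw [TensorProduct.add_tmul, map_add]; exact add_mem ha hb
    | single g c =>
      have : MonoidAlgebra.single g (1 : F) ⊗ₜ[F] (c • s) =
          MonoidAlgebra.single g c ⊗ₜ[F] s := by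
        rw [TensorProduct.tmul_smul, TensorProduct.smul_tmul', MonoidAlgebra.smul_single',
          mul_one]
      rw [← this]
      exact le_iSup (fun g => LinearMap.range (indMk τ g)) g ⟨c • s, rfl⟩

theorem iSup_map_indRep_range_indMk_one :
    ⨆ g : G, (LinearMap.range (indMk τ 1)).map (IndRep F H τ g) = ⊤ := by
  rw [← iSup_range_indMk τ]
  congr! with g
  rw [← LinearMap.range_comp]
  congr 1
  ext s
  simp [indRep_indMk]

theorem indCar_linearMap_ext {f f' : IndCar F H τ →ₗ[F] V}
    (h : ∀ (g : G) (s : S), f (indMk τ g s) = f' (indMk τ g s)) : f = f' := by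
  have : ⊤ ≤ LinearMap.eqLocus f f' :=
    iSup_range_indMk τ ▸ iSup_le fun g => by rintro _ ⟨s, rfl⟩; exact h g s
  exact LinearMap.ext fun z => this Submodule.mem_top

section Descent

variable (φ : G → S →ₗ[F] V) (hφ : ∀ (g : G) (h : H), φ (g * h) = φ g ∘ₗ τ h)

include hφ in
theorem indDescAux_eq_zero : ∀ z ∈ indRel F H τ, indDescAux φ z = 0 := by
  suffices ∀ z ∈ indRel F H τ, ∀ a : MonoidAlgebra F G, indDescAux φ (a • z) = 0 from
    fun z hz => by simpa using this z hz 1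
  intro z hz
  induction hz using Submodule.span_induction with
  | mem x hx =>
    obtain ⟨h, s, rfl⟩ := hx
    intro a
    induction a using MonoidAlgebra.induction_linear with
    | zero => rw [zero_smul, map_zero]
    | add a b ha hb => rw [add_smul, map_add, ha, hb, add_zero]
    | single g c =>
      rw [smul_sub, TensorProduct.smul_tmul', TensorProduct.smul_tmul', smul_eq_mul,
        smul_eq_mul, MonoidAlgebra.single_mul_single, mul_one, mul_one, map_sub,
        indDescAux_single, indDescAux_single, hφ, LinearMap.comp_apply, sub_self]
  | zero => simp
  | add x y _ _ hx hy => intro a; rw [smul_add, map_add, hx, hy, add_zero]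
  | smul b x _ hx => intro a; rw [smul_smul]; exact hx (a * b)

noncomputable def indDesc : IndCar F H τ →ₗ[F] V :=
  (Submodule.liftQ ((indRel F H τ).restrictScalars F) (indDescAux φ)
    (fun z hz => indDescAux_eq_zero τ φ hφ z hz)) ∘ₗ
    (Submodule.Quotient.restrictScalarsEquiv F (indRel F H τ)).symm.toLinearMap

theorem indDesc_indMk (g : G) (s : S) : indDesc τ φ hφ (indMk τ g s) = φ g s := by
  have : indDesc τ φ hφ (indMk τ g s) =
      Submodule.liftQ ((indRel F H τ).restrictScalars F) (indDescAux φ)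
        (fun z hz => indDescAux_eq_zero τ φ hφ z hz)
        ((Submodule.Quotient.restrictScalarsEquiv F (indRel F H τ)).symm
          (Submodule.Quotient.mk (MonoidAlgebra.single g 1 ⊗ₜ[F] s))) := rfl
  rw [this, Submodule.Quotient.restrictScalarsEquiv_symm_mk]
  exact (Submodule.liftQ_apply _ _ _).trans ((indDescAux_single φ g 1 s).trans (one_smul F _))

end Descent

theorem indMk_one_injective : Function.Injective (indMk τ 1) := by
  classical
  -- a left inverse is the projection onto the summand `1 ⊗ S` of `ind_H^G S`
  let φ : G → S →ₗ[F] S := fun g => if hg : g ∈ H then τ ⟨g, hg⟩ else 0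
  have hφ : ∀ (g : G) (h : H), φ (g * h) = φ g ∘ₗ τ h := by
    intro g h
    by_cases hg : g ∈ H
    · simp only [φ, dif_pos (H.mul_mem hg h.2), dif_pos hg, ← Module.End.mul_eq_comp,
        ← map_mul]
      rfl
    · have hgh : g * h ∉ H := fun hgh => hg (by simpa using H.mul_mem hgh (H.inv_mem h.2))
      simp only [φ, dif_neg hgh, dif_neg hg, LinearMap.zero_comp]
  refine Function.LeftInverse.injective (g := indDesc τ φ hφ) fun s => ?_
  rw [indDesc_indMk]
  simp only [φ, dif_pos H.one_mem]
  exact congrArg (· s) (map_one τ)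

section Lift

variable (ρ : Representation F G V) (j : S →ₗ[F] V)
  (hj : ∀ (h : H) (s : S), j (τ h s) = ρ h (j s))

noncomputable def indLift : IndCar F H τ →ₗ[F] V :=
  indDesc τ (fun g => ρ g ∘ₗ j) fun g h => by ext s; simp [hj, map_mul]

theorem indLift_indMk (g : G) (s : S) : indLift τ ρ j hj (indMk τ g s) = ρ g (j s) :=
  indDesc_indMk τ _ _ g s

theorem indLift_indRep (g : G) (z : IndCar F H τ) :
    indLift τ ρ j hj (IndRep F H τ g z) = ρ g (indLift τ ρ j hj z) :=
  LinearMap.congr_fun (indCar_linearMap_ext τ (f := indLift τ ρ j hj ∘ₗ IndRep F H τ g)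
    (f' := ρ g ∘ₗ indLift τ ρ j hj)
    fun g' s => by simp [indRep_indMk, indLift_indMk, map_mul]) z

end Lift

theorem repIso_indRep_subRep {ρ : Representation F G V} (hρ : IsIrreducibleRep F ρ)
    {M : Submodule F V} (hM : IsInvariant (ρ.comp H.subtype) M) (hM0 : M ≠ ⊥)
    (hind : IsIrreducibleRep F (IndRep F H (subRep F (ρ.comp H.subtype) M hM))) :
    RepIso F (IndRep F H (subRep F (ρ.comp H.subtype) M hM)) ρ := by
  have hj : ∀ (h : H) (m : M), M.subtype (subRep F (ρ.comp H.subtype) M hM h m) =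
      ρ h (M.subtype m) := fun _ _ => rfl
  refine repIso_of_ne_zero (indLift_indRep _ ρ _ hj) hind hρ fun h => ?_
  obtain ⟨m, hm, hm0⟩ := Submodule.exists_mem_ne_zero_of_ne_bot hM0
  have := LinearMap.congr_fun h (indMk _ 1 ⟨m, hm⟩)
  rw [indLift_indMk, map_one] at this
  exact hm0 this

theorem _root_.RepIso.indRep {S' : Type*} [AddCommGroup S'] [Module F S']
    {τ' : Representation F H S'} (h : RepIso F τ τ') :
    RepIso F (IndRep F H τ) (IndRep F H τ') := by
  obtain ⟨e, he⟩ := h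
  have hj : ∀ (h : H) (s : S), (indMk τ' 1 ∘ₗ e.toLinearMap) (τ h s) =
      IndRep F H τ' h ((indMk τ' 1 ∘ₗ e.toLinearMap) s) := fun h s => by
    simp [he, indMk_one_apply]
  have hj' : ∀ (h : H) (s : S'), (indMk τ 1 ∘ₗ e.symm.toLinearMap) (τ' h s) =
      IndRep F H τ h ((indMk τ 1 ∘ₗ e.symm.toLinearMap) s) := fun h s => by
    have : e.symm (τ' h s) = τ h (e.symm s) :=
      e.injective (by rw [he, e.apply_symm_apply, e.apply_symm_apply])
    simp [this, indMk_one_apply]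
  have hL : ∀ g s, indLift τ _ _ hj (indMk τ g s) = indMk τ' g (e s) := fun g s => by
    simp [indLift_indMk, indRep_indMk]
  have hL' : ∀ g s, indLift τ' _ _ hj' (indMk τ' g s) = indMk τ g (e.symm s) := fun g s => by
    simp [indLift_indMk, indRep_indMk]
  exact ⟨LinearEquiv.ofLinearMap (indLift τ _ _ hj) (indLift τ' _ _ hj')
    (indCar_linearMap_ext τ' fun g s => by simp [hL, hL'])
    (indCar_linearMap_ext τ fun g s => by simp [hL, hL']), indLift_indRep τ _ _ hj⟩

end Induction

section Conjugation

variable {G : Type*} [Group G] {N : Subgroup G} (hN : N.Normal)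

theorem conjHom_comp_conjHom_inv (g : G) : (conjHom hN g).comp (conjHom hN g⁻¹) = .id N := by
  ext n
  simp [conjHom, mul_assoc]

theorem conjHom_surjective (g : G) : Function.Surjective (conjHom hN g) :=
  fun n => ⟨conjHom hN g⁻¹ n, DFunLike.congr_fun (conjHom_comp_conjHom_inv hN g) n⟩

variable {F : Type*} [Field F] {V W : Type*} [AddCommGroup V] [Module F V] [AddCommGroup W]
  [Module F W] {ρ : Representation F G V}

theorem comp_conjHom_comp_conjHom_inv (σ : Representation F N W) (g : G) :
    (σ.comp (conjHom hN g)).comp (conjHom hN g⁻¹) = σ := by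
  rw [MonoidHom.comp_assoc, conjHom_comp_conjHom_inv, MonoidHom.comp_id]

theorem Affords.map_conj {Y : Submodule F V} {σ : Representation F N W}
    (h : Affords (ρ.comp N.subtype) Y σ) (g : G) :
    Affords (ρ.comp N.subtype) (Y.map (ρ g)) (σ.comp (conjHom hN g⁻¹)) := by
  obtain ⟨hY, hirr, e⟩ := h
  have hf : ∀ n : N, ∀ v ∈ Y, ρ g (((ρ.comp N.subtype).comp (conjHom hN g⁻¹)) n v) =
      (ρ.comp N.subtype) n (ρ g v) := fun n v _ => by
    simp [conjHom, ← Module.End.mul_apply, ← map_mul, mul_assoc]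
  have hker : Disjoint Y (LinearMap.ker (ρ g)) := by
    rw [LinearMap.ker_eq_bot.mpr (ρ.apply_bijective g).1]
    exact disjoint_bot_right
  have e' := repIso_subRep_map (ρ g) hf (fun n => hY _) hker
  exact ⟨_, e'.isIrreducibleRep (hirr.comp_of_surjective (conjHom_surjective hN g⁻¹)),
    e'.symm.trans (e.comp _)⟩

end Conjugation

section Correspondence

variable {F : Type*} [Field F] {G : Type*} [Group G] {N : Subgroup G} (hN : N.Normal)
  {W : Type*} [AddCommGroup W] [Module F W] {σ : Representation F N W} {T : Subgroup G}
  (hT : ∀ g : G, g ∈ T ↔ RepIso F (σ.comp (conjHom hN g)) σ)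

section Inertia

variable {V : Type*} [AddCommGroup V] [Module F V] {ρ : Representation F G V}

include hT in
theorem homComponent_eq_iSup_inertia {Y : Submodule F V} (hY : Affords (ρ.comp N.subtype) Y σ)
    (hgen : ⨆ g, Y.map (ρ g) = ⊤) :
    homComponent F (ρ.comp N.subtype) σ = ⨆ t : T, Y.map (ρ t) := by
  have hS : ∀ p ∈ Set.range fun g => Y.map (ρ g),
      IsIrreducibleSubmodule (ρ.comp N.subtype) p := by
    rintro _ ⟨g, rfl⟩
    exact (hY.map_conj hN g).isIrreducibleSubmodule
  -- `Y.map (ρ g)` affords `σ.comp (conjHom hN g⁻¹)`, which is isomorphic to `σ` iff `g ∈ T`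
  rw [homComponent_eq_sSup hS (by rwa [sSup_range])]
  refine le_antisymm (sSup_le ?_) (iSup_le fun t => le_sSup
    ⟨⟨t, rfl⟩, (hY.map_conj hN t).trans ((hT _).mp (T.inv_mem t.2))⟩)
  rintro _ ⟨⟨g, rfl⟩, hgσ⟩
  have hg : g ∈ T := T.inv_mem_iff.mp ((hT g⁻¹).mpr ((hY.map_conj hN g).repIso hgσ))
  exact le_iSup (fun t : T => Y.map (ρ t)) ⟨g, hg⟩

end Inertia

section Induced

variable {S : Type*} [AddCommGroup S] [Module F S] {τ : Representation F T S} (hNT : N ≤ T)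
  {q₀ : Submodule F S} (hq₀ : Affords (τ.comp (Subgroup.inclusion hNT)) q₀ σ)

include hq₀ in
theorem affords_map_indMk_one :
    Affords ((IndRep F T τ).comp N.subtype) (q₀.map (indMk τ 1)) σ := by
  refine hq₀.map _ (fun n v _ => indMk_one_apply τ (Subgroup.inclusion hNT n) v) ?_
  rw [LinearMap.ker_eq_bot.mpr (indMk_one_injective τ)]
  exact disjoint_bot_right

include hq₀ in
theorem iSup_inertia_map_indMk_one (hτ : IsIrreducibleRep F τ) :
    ⨆ t : T, (q₀.map (indMk τ 1)).map (IndRep F T τ t) = LinearMap.range (indMk τ 1) := by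
  have : ∀ t : T,
      (q₀.map (indMk τ 1)).map (IndRep F T τ t) = (q₀.map (τ t)).map (indMk τ 1) :=
    fun t => by
      rw [← Submodule.map_comp, ← Submodule.map_comp]
      congr 1
      ext s
      exact (indMk_one_apply τ t s).symm
  simp_rw [this, ← Submodule.map_iSup, iSup_map_eq_top hτ hq₀.2.1.ne_bot,
    LinearMap.range_eq_map]

include hq₀ in
theorem iSup_map_indRep_eq_top (hτ : IsIrreducibleRep F τ) :
    ⨆ g, (q₀.map (indMk τ 1)).map (IndRep F T τ g) = ⊤ := by
  refine eq_top_iff.mpr ((iSup_map_indRep_range_indMk_one τ).ge.trans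
    (iSup_map_le (isInvariant_iSup_map _ _) ?_))
  rw [← iSup_inertia_map_indMk_one hNT hq₀ hτ]
  exact iSup_le fun t => le_iSup (fun g => (q₀.map (indMk τ 1)).map (IndRep F T τ g)) t

include hT hq₀ in
theorem homComponent_indRep (hτ : IsIrreducibleRep F τ) :
    homComponent F ((IndRep F T τ).comp N.subtype) σ = LinearMap.range (indMk τ 1) :=
  (homComponent_eq_iSup_inertia hN hT (affords_map_indMk_one hNT hq₀)
    (iSup_map_indRep_eq_top hNT hq₀ hτ)).trans (iSup_inertia_map_indMk_one hNT hq₀ hτ)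

theorem isInvariant_range_indMk_one :
    IsInvariant ((IndRep F T τ).comp T.subtype) (LinearMap.range (indMk τ 1)) := by
  rintro t _ ⟨s, rfl⟩
  exact ⟨τ t s, indMk_one_apply τ t s⟩

theorem repIso_subRep_range_indMk_one :
    RepIso F (subRep F _ _ (isInvariant_range_indMk_one (τ := τ))) τ :=
  RepIso.symm ⟨LinearEquiv.ofInjective _ (indMk_one_injective τ),
    fun t s => Subtype.ext (indMk_one_apply τ t s)⟩

include hT hq₀ in
theorem isIrreducibleRep_indRep (hτ : IsIrreducibleRep F τ) :
    IsIrreducibleRep F (IndRep F T τ) := by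
  have := hτ.1
  refine ⟨(indMk_one_injective τ).nontrivial, fun U hU =>
    or_iff_not_imp_left.mpr fun hU0 => ?_⟩
  have hY₁ := affords_map_indMk_one hNT hq₀
  have hS : ∀ p ∈ Set.range fun g => (q₀.map (indMk τ 1)).map (IndRep F T τ g),
      IsIrreducibleSubmodule ((IndRep F T τ).comp N.subtype) p := by
    rintro _ ⟨g, rfl⟩
    exact (hY₁.map_conj hN g).isIrreducibleSubmodule
  obtain ⟨Y, hYU, _, ⟨g, rfl⟩, _, hY⟩ := exists_affords_le hS (fun n => hU n)
    (by rw [sSup_range, iSup_map_indRep_eq_top hNT hq₀ hτ]; exact le_top) hU0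
  have hY' := (hY.trans (hY₁.map_conj hN g).2.2).map_conj hN g⁻¹
  rw [comp_conjHom_comp_conjHom_inv] at hY'
  have hYU' : Y.map (IndRep F T τ g⁻¹) ≤ U :=
    Submodule.map_le_iff_le_comap.mpr (hYU.trans (hU g⁻¹))
  have hR := repIso_subRep_range_indMk_one.symm.isIrreducibleRep hτ
  have hRU : LinearMap.range (indMk τ 1) ≤ U := by
    rcases hR.eq_bot_or_eq_of_le inf_le_right fun t v hv => ⟨hU t v hv.1,
      isInvariant_range_indMk_one t v hv.2⟩ with h | h
    · refine absurd (eq_bot_iff.mpr ?_) hY'.2.1.ne_bot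
      rw [← h]
      exact le_inf hYU' (homComponent_indRep hN hT hNT hq₀ hτ ▸ hY'.le_homComponent)
    · exact h ▸ inf_le_left
  exact eq_top_iff.mpr ((iSup_map_indRep_range_indMk_one τ).ge.trans (iSup_map_le hU hRU))

end Induced

section Restricted

variable {V : Type*} [AddCommGroup V] [Module F V] {ρ : Representation F G V}
  (hρ : IsIrreducibleRep F ρ) {q₀ : Submodule F V} (hq₀ : Affords (ρ.comp N.subtype) q₀ σ)

include hT hρ hq₀ in
theorem isInvariant_homComponent_inertia :
    IsInvariant (ρ.comp T.subtype) (homComponent F (ρ.comp N.subtype) σ) := by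
  rw [homComponent_eq_iSup_inertia hN hT hq₀ (iSup_map_eq_top hρ hq₀.2.1.ne_bot)]
  exact isInvariant_iSup_map (ρ.comp T.subtype) q₀

include hρ hq₀ in
theorem isIrreducibleRep_subRep_homComponent (hNT : N ≤ T) :
    IsIrreducibleRep F (subRep F (ρ.comp T.subtype) (homComponent F (ρ.comp N.subtype) σ)
      (isInvariant_homComponent_inertia hN hT hρ hq₀)) := by
  have hM := homComponent_eq_iSup_inertia hN hT hq₀ (iSup_map_eq_top hρ hq₀.2.1.ne_bot)
  refine (isIrreducibleRep_subRep_iff _).mpr ⟨fun h => hq₀.2.1.ne_bot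
    (eq_bot_iff.mpr (h ▸ hq₀.le_homComponent)), fun U hUM hU =>
      or_iff_not_imp_left.mpr fun hU0 => le_antisymm hUM ?_⟩
  have hS : ∀ p ∈ Set.range fun t : T => q₀.map (ρ t),
      IsIrreducibleSubmodule (ρ.comp N.subtype) p := by
    rintro _ ⟨t, rfl⟩
    exact (hq₀.map_conj hN t).isIrreducibleSubmodule
  obtain ⟨Y, hYU, _, ⟨t, rfl⟩, _, hY⟩ := exists_affords_le hS (fun n => hU ⟨n, hNT n.2⟩)
    (by rwa [sSup_range, ← hM]) hU0
  have hYσ := hY.trans ((hq₀.map_conj hN t).trans ((hT _).mp (T.inv_mem t.2))).2.2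
  rw [homComponent_eq_iSup_inertia hN hT hYσ (iSup_map_eq_top hρ hYσ.2.1.ne_bot)]
  exact iSup_le fun t => Submodule.map_le_iff_le_comap.mpr (hYU.trans (hU t))

include hq₀ in
theorem liesOver_subRep_homComponent (hNT : N ≤ T)
    (hM : IsInvariant (ρ.comp T.subtype) (homComponent F (ρ.comp N.subtype) σ)) :
    LiesOver F ((subRep F (ρ.comp T.subtype) _ hM).comp (Subgroup.inclusion hNT)) σ :=
  liesOver_subRep_of_affords hq₀ hq₀.le_homComponent isInvariant_homComponent

include hN hT hρ hq₀ in
theorem repIso_indRep_subRep_homComponent (hσ : IsIrreducibleRep F σ) (hNT : N ≤ T)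
    (hM : IsInvariant (ρ.comp T.subtype) (homComponent F (ρ.comp N.subtype) σ))
    (hMirr : IsIrreducibleRep F (subRep F (ρ.comp T.subtype) _ hM)) :
    RepIso F (IndRep F T (subRep F (ρ.comp T.subtype) _ hM)) ρ := by
  obtain ⟨q₁, hq₁⟩ := (liesOver_subRep_homComponent hq₀ hNT hM).exists_affords hσ
  exact repIso_indRep_subRep hρ hM hMirr.ne_bot (isIrreducibleRep_indRep hN hT hNT hq₁ hMirr)

end Restricted

end Correspondence

end Clifford

universe u

/-- Theorem 3.5 (Clifford correspondence): let `N ⊴ G` and let `W` be an irreducible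
`FN`-module with inertia group `T`.  The maps `S ↦ ind_T^G S` and
`V ↦ (W`-homogeneous component of `V)` yield mutually inverse bijections between the
isomorphism classes of irreducible `FT`-modules lying over `W` and the isomorphism classes
of irreducible `FG`-modules lying over `W`. -/
theorem clifford_correspondence
    (F : Type*) [Field F] {G : Type*} [Group G] (N : Subgroup G) (hN : N.Normal)
    (W : Type u) [AddCommGroup W] [Module F W] (σ : Representation F ↥N W)
    (hσ : IsIrreducibleRep F σ)
    (T : Subgroup G) (hNT : N ≤ T)
    (hT : ∀ g : G, g ∈ T ↔ RepIso F (σ.comp (conjHom hN g)) σ) :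
    -- induction maps irreducible FT-modules lying over W to irreducible FG-modules lying
    -- over W, and taking the W-homogeneous component recovers the original module:
    (∀ (S : Type u) (_ : AddCommGroup S) (_ : Module F S) (τ : Representation F ↥T S),
      IsIrreducibleRep F τ → LiesOver F (τ.comp (Subgroup.inclusion hNT)) σ →
        IsIrreducibleRep F (IndRep F T τ) ∧
        LiesOver F ((IndRep F T τ).comp N.subtype) σ ∧
        ∃ hinv : ∀ t : ↥T, ∀ v ∈ homComponent F ((IndRep F T τ).comp N.subtype) σ,
            ((IndRep F T τ).comp T.subtype) t v ∈
              homComponent F ((IndRep F T τ).comp N.subtype) σ,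
          RepIso F
            (subRep F ((IndRep F T τ).comp T.subtype)
              (homComponent F ((IndRep F T τ).comp N.subtype) σ) hinv) τ) ∧
    -- the W-homogeneous component of an irreducible FG-module lying over W is an
    -- irreducible FT-module lying over W, and induction recovers the original module:
    (∀ (V : Type u) (_ : AddCommGroup V) (_ : Module F V) (ρV : Representation F G V),
      IsIrreducibleRep F ρV → LiesOver F (ρV.comp N.subtype) σ →
        ∃ hinv : ∀ t : ↥T, ∀ v ∈ homComponent F (ρV.comp N.subtype) σ,
            (ρV.comp T.subtype) t v ∈ homComponent F (ρV.comp N.subtype) σ,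
          IsIrreducibleRep F
            (subRep F (ρV.comp T.subtype) (homComponent F (ρV.comp N.subtype) σ) hinv) ∧
          LiesOver F
            ((subRep F (ρV.comp T.subtype) (homComponent F (ρV.comp N.subtype) σ)
              hinv).comp (Subgroup.inclusion hNT)) σ ∧
          RepIso F
            (IndRep F T
              (subRep F (ρV.comp T.subtype) (homComponent F (ρV.comp N.subtype) σ) hinv))
            ρV) ∧
    -- both maps are well defined on isomorphism classes:
    (∀ (S₁ : Type u) (_ : AddCommGroup S₁) (_ : Module F S₁)
        (S₂ : Type u) (_ : AddCommGroup S₂) (_ : Module F S₂)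
        (τ₁ : Representation F ↥T S₁) (τ₂ : Representation F ↥T S₂),
      RepIso F τ₁ τ₂ → RepIso F (IndRep F T τ₁) (IndRep F T τ₂)) := by
  refine ⟨fun S _ _ τ hτ hlies => ?_, fun V _ _ ρ hρ hlies => ?_,
    fun _ _ _ _ _ _ _ _ h => h.indRep⟩
  · obtain ⟨q₀, hq₀⟩ := hlies.exists_affords hσ
    refine ⟨Clifford.isIrreducibleRep_indRep hN hT hNT hq₀ hτ,
      (Clifford.affords_map_indMk_one hNT hq₀).liesOver, ?_⟩
    rw [Clifford.homComponent_indRep hN hT hNT hq₀ hτ]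
    exact ⟨_, Clifford.repIso_subRep_range_indMk_one⟩
  · obtain ⟨q₀, hq₀⟩ := hlies.exists_affords hσ
    have hM := Clifford.isInvariant_homComponent_inertia hN hT hρ hq₀
    have hMirr := Clifford.isIrreducibleRep_subRep_homComponent hN hT hρ hq₀ hNT
    exact ⟨hM, hMirr, Clifford.liesOver_subRep_homComponent hq₀ hNT hM,
      Clifford.repIso_indRep_subRep_homComponent hN hT hρ hq₀ hσ hNT hM hMirr⟩
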